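/- arXiv:1701.04995 — 3 statements merged into one kernel-verified Lean document; each statement's English description precedes it below -/
import Mathlib

section
/- Let μ be a nontrivial positive measure on the unit circle and |w| ≤ 1. Then ∫_T K_n(ζ,w;μ)(1 − w̄ζ) dμ(ζ) ≠ 0. -/
open MeasureTheory Complex Polynomial

/-- The Christoffel–Darboux kernel built from a family of polynomials. -/
noncomputable def CDkernel (φ : ℕ → Polynomial ℂ) (n : ℕ) (z w : ℂ) : ℂ :=
  ∑ j ∈ Finset.range (n + 1), (starRingEnd ℂ) ((φ j).eval w) * (φ j).eval z

/-- `φ` is the sequence of orthonormal polynomials (with positive leading coefficients)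
of the measure `μ` on the unit circle. -/
def IsOPUC (μ : Measure ℂ) (φ : ℕ → Polynomial ℂ) : Prop :=
  (∀ n, (φ n).degree = n) ∧
  (∀ n, 0 < ((φ n).leadingCoeff).re ∧ ((φ n).leadingCoeff).im = 0) ∧
  (∀ m n, ∫ ζ, (starRingEnd ℂ) ((φ m).eval ζ) * (φ n).eval ζ ∂μ =
    if m = n then 1 else 0)

/-!
Write `K` for the polynomial `z ↦ K_n(z, w)` and `H = K · (1 - w̄ X)`. By the reproducing property
`∫ conj(p) K dμ = conj(p(w))` for `deg p ≤ n`, together with `ζ̄ ζ = 1` on the circle, `H` is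
orthogonal to `X, …, Xⁿ`. If also `∫ H dμ = 0`, then `H` is orthogonal to `K`, i.e.
`∫ |K|² (1 - w̄ζ) dμ = 0`; as `|1 - u|² ≤ 2 Re (1 - u)` for `|u| ≤ 1`, this forces `H = 0` μ-a.e.
A polynomial of degree `≤ n + 1` vanishing μ-a.e. is zero, since its coefficients in the
orthonormal basis `(φ_j)` are its inner products with the `φ_j`. Hence `K = 0`, contradicting
`K(w) = ∑ |φ_j(w)|² ≥ |φ_0(w)|² > 0`.
-/

open ComplexConjugate Finset

theorem Continuous.integrable_of_ae_mem_isCompact {α E : Type*} [TopologicalSpace α] [T2Space α]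
    [MeasurableSpace α] [OpensMeasurableSpace α] [NormedAddCommGroup E] {μ : Measure α}
    [IsFiniteMeasureOnCompacts μ] {K : Set α} {f : α → E} (hK : IsCompact K)
    (hμK : ∀ᵐ x ∂μ, x ∈ K) (hf : Continuous f) : Integrable f μ := by
  rw [← Measure.restrict_eq_self_of_ae_mem hμK]
  exact hf.continuousOn.integrableOn_compact hK

theorem Polynomial.exists_sum_smul_eq_of_natDegree_le {K : Type*} [Field K] {φ : ℕ → K[X]}
    (hdeg : ∀ n, (φ n).degree = n) {p : K[X]} {m : ℕ} (hp : p.natDegree ≤ m) :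
    ∃ c : ℕ → K, ∑ i ∈ range (m + 1), c i • φ i = p := by
  let S : Sequence K := ⟨φ, hdeg⟩
  have hspan : p ∈ Submodule.span K (φ '' Set.Iio (m + 1)) := by
    rw [S.span_degreeLT fun i _ ↦ isUnit_iff_ne_zero.2 (leadingCoeff_ne_zero.2 (S.ne_zero i)),
      mem_degreeLT]
    exact degree_le_natDegree.trans_lt (by exact_mod_cast Nat.lt_succ_of_le hp)
  rwa [← coe_range, Submodule.mem_span_image_finset_iff_exists_fun'] at hspan

def PolyConjMulIntegrable (μ : Measure ℂ) : Prop :=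
  ∀ p q : ℂ[X], Integrable (fun ζ ↦ conj (p.eval ζ) * q.eval ζ) μ

theorem polyConjMulIntegrable_of_ae_norm_eq_one {μ : Measure ℂ} [IsFiniteMeasure μ]
    (hcirc : ∀ᵐ ζ ∂μ, ‖ζ‖ = 1) : PolyConjMulIntegrable μ := fun p q ↦
  ((continuous_conj.comp p.continuous).mul q.continuous).integrable_of_ae_mem_isCompact
    (isCompact_sphere 0 1) (by simpa [mem_sphere_zero_iff_norm] using hcirc)

namespace PolyConjMulIntegrable

variable {μ : Measure ℂ}

theorem integral_conj_eval_mul_eval_sum (hμ : PolyConjMulIntegrable μ) (p : ℂ[X]) {ι : Type*}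
    (s : Finset ι) (c : ι → ℂ) (ψ : ι → ℂ[X]) :
    ∫ ζ, conj (p.eval ζ) * (∑ i ∈ s, c i • ψ i).eval ζ ∂μ =
      ∑ i ∈ s, c i * ∫ ζ, conj (p.eval ζ) * (ψ i).eval ζ ∂μ := by
  simp_rw [eval_finsetSum, mul_sum]
  rw [integral_finsetSum _ fun i _ ↦ hμ p (c i • ψ i)]
  refine sum_congr rfl fun i _ ↦ ?_
  simp_rw [eval_smul, smul_eq_mul, mul_left_comm _ (c i)]
  exact integral_const_mul _ _

theorem integral_conj_eval_sum_mul_eval (hμ : PolyConjMulIntegrable μ) {ι : Type*}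
    (s : Finset ι) (c : ι → ℂ) (ψ : ι → ℂ[X]) (q : ℂ[X]) :
    ∫ ζ, conj ((∑ i ∈ s, c i • ψ i).eval ζ) * q.eval ζ ∂μ =
      ∑ i ∈ s, conj (c i) * ∫ ζ, conj ((ψ i).eval ζ) * q.eval ζ ∂μ := by
  simp_rw [eval_finsetSum, map_sum, sum_mul]
  rw [integral_finsetSum _ fun i _ ↦ hμ (c i • ψ i) q]
  refine sum_congr rfl fun i _ ↦ ?_
  simp_rw [eval_smul, smul_eq_mul, map_mul, mul_assoc]
  exact integral_const_mul _ _

theorem integral_conj_eval_mul_eq_zero_of_forall_pow (hμ : PolyConjMulIntegrable μ)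
    {p q : ℂ[X]} {n : ℕ} (hp : p.natDegree ≤ n)
    (hq : ∀ k ≤ n, ∫ ζ, conj (ζ ^ k) * q.eval ζ ∂μ = 0) :
    ∫ ζ, conj (p.eval ζ) * q.eval ζ ∂μ = 0 := by
  rw [p.as_sum_range_C_mul_X_pow' (Nat.lt_succ_of_le hp)]
  simp_rw [← smul_eq_C_mul]
  rw [hμ.integral_conj_eval_sum_mul_eval]
  refine sum_eq_zero fun k hk ↦ ?_
  simp_rw [eval_pow, eval_X, hq k (Nat.lt_succ_iff.1 (mem_range.1 hk)), mul_zero]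

end PolyConjMulIntegrable

noncomputable def CDkernelPoly (φ : ℕ → ℂ[X]) (n : ℕ) (w : ℂ) : ℂ[X] :=
  ∑ j ∈ range (n + 1), conj ((φ j).eval w) • φ j

theorem eval_CDkernelPoly (φ : ℕ → ℂ[X]) (n : ℕ) (z w : ℂ) :
    (CDkernelPoly φ n w).eval z = CDkernel φ n z w := by
  simp [CDkernelPoly, CDkernel, eval_finsetSum]

theorem natDegree_CDkernelPoly_le {φ : ℕ → ℂ[X]} (hdeg : ∀ n, (φ n).degree = n) (n : ℕ)
    (w : ℂ) : (CDkernelPoly φ n w).natDegree ≤ n := by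
  refine natDegree_sum_le_of_forall_le _ _ fun j hj ↦ (natDegree_smul_le _ _).trans ?_
  rw [natDegree_eq_of_degree_eq_some (hdeg j)]
  exact Nat.lt_succ_iff.1 (mem_range.1 hj)

theorem eval_self_CDkernelPoly_ne_zero {φ : ℕ → ℂ[X]} (hφ₀ : (φ 0).degree = 0) (n : ℕ)
    (w : ℂ) : (CDkernelPoly φ n w).eval w ≠ 0 := by
  have hre : ((CDkernelPoly φ n w).eval w).re = ∑ j ∈ range (n + 1), ‖(φ j).eval w‖ ^ 2 := by
    simp [CDkernelPoly, eval_finsetSum, conj_mul', ← ofReal_pow]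
  have hφ₀w : (φ 0).eval w ≠ 0 := fun h ↦
    (degree_pos_of_root (fun h₀ ↦ by simp [h₀] at hφ₀) h).ne' hφ₀
  intro h
  have hpos : 0 < ∑ j ∈ range (n + 1), ‖(φ j).eval w‖ ^ 2 :=
    sum_pos' (fun j _ ↦ sq_nonneg _) ⟨0, by simp, pow_pos (norm_pos_iff.2 hφ₀w) 2⟩
  rw [← hre, h, zero_re] at hpos
  exact hpos.false

namespace IsOPUC

variable {μ : Measure ℂ} {φ : ℕ → ℂ[X]}

theorem integral_conj_eval_mul_eval_sum_eq (hμ : PolyConjMulIntegrable μ) (hφ : IsOPUC μ φ)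
    {s : Finset ℕ} {j : ℕ} (hj : j ∈ s) (c : ℕ → ℂ) :
    ∫ ζ, conj ((φ j).eval ζ) * (∑ i ∈ s, c i • φ i).eval ζ ∂μ = c j := by
  simp [hμ.integral_conj_eval_mul_eval_sum, hφ.2.2, hj]

theorem eq_zero_of_ae_eval_eq_zero (hμ : PolyConjMulIntegrable μ) (hφ : IsOPUC μ φ)
    {p : ℂ[X]} {m : ℕ} (hp : p.natDegree ≤ m) (h : ∀ᵐ ζ ∂μ, p.eval ζ = 0) : p = 0 := by
  obtain ⟨c, rfl⟩ := exists_sum_smul_eq_of_natDegree_le hφ.1 hp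
  refine sum_eq_zero fun j hj ↦ ?_
  have hcj : c j = ∫ ζ, conj ((φ j).eval ζ) * 0 ∂μ := by
    rw [← hφ.integral_conj_eval_mul_eval_sum_eq hμ hj c]
    refine integral_congr_ae ?_
    filter_upwards [h] with ζ hζ
    rw [hζ]
  simp [hcj]

theorem integral_conj_eval_mul_CDkernelPoly (hμ : PolyConjMulIntegrable μ) (hφ : IsOPUC μ φ)
    {p : ℂ[X]} {n : ℕ} (hp : p.natDegree ≤ n) (w : ℂ) :
    ∫ ζ, conj (p.eval ζ) * (CDkernelPoly φ n w).eval ζ ∂μ = conj (p.eval w) := by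
  obtain ⟨c, rfl⟩ := exists_sum_smul_eq_of_natDegree_le hφ.1 hp
  rw [hμ.integral_conj_eval_sum_mul_eval]
  simp only [CDkernelPoly]
  rw [eval_finsetSum, map_sum]
  refine sum_congr rfl fun i hi ↦ ?_
  rw [hφ.integral_conj_eval_mul_eval_sum_eq hμ hi, eval_smul, smul_eq_mul, map_mul]

theorem integral_conj_pow_succ_mul_eq_zero (hcirc : ∀ᵐ ζ ∂μ, ‖ζ‖ = 1)
    (hμ : PolyConjMulIntegrable μ) (hφ : IsOPUC μ φ) {k n : ℕ} (hk : k + 1 ≤ n) (w : ℂ) :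
    ∫ ζ, conj (ζ ^ (k + 1)) * (CDkernelPoly φ n w * (1 - C (conj w) * X)).eval ζ ∂μ = 0 := by
  set K := CDkernelPoly φ n w
  have hrep : ∀ j ≤ n, ∫ ζ, conj ((X ^ j : ℂ[X]).eval ζ) * K.eval ζ ∂μ = conj (w ^ j) := by
    intro j hj
    simpa using hφ.integral_conj_eval_mul_CDkernelPoly hμ ((natDegree_X_pow_le j).trans hj) w
  calc ∫ ζ, conj (ζ ^ (k + 1)) * (K * (1 - C (conj w) * X)).eval ζ ∂μ
      = ∫ ζ, conj ((X ^ (k + 1) : ℂ[X]).eval ζ) * K.eval ζ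
          - conj w * (conj ((X ^ k : ℂ[X]).eval ζ) * K.eval ζ) ∂μ := by
        refine integral_congr_ae ?_
        filter_upwards [hcirc] with ζ hζ
        have hζ' : conj ζ * ζ = 1 := by rw [conj_mul', hζ]; norm_num
        simp only [eval_mul, eval_sub, eval_one, eval_C, eval_X, eval_pow, pow_succ, map_mul,
          map_pow]
        linear_combination -conj w * conj ζ ^ k * K.eval ζ * hζ'
    _ = conj (w ^ (k + 1)) - conj w * conj (w ^ k) := by
        rw [integral_sub (hμ _ _) ((hμ _ _).const_mul _), integral_const_mul,
          hrep _ hk, hrep _ (Nat.le_of_succ_le hk)]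
    _ = 0 := by rw [pow_succ, map_mul]; ring

end IsOPUC

theorem Complex.norm_mul_one_sub_sq_le_two_mul_re {u : ℂ} (hu : ‖u‖ ≤ 1) (a : ℂ) :
    ‖a * (1 - u)‖ ^ 2 ≤ 2 * (conj a * (a * (1 - u))).re := by
  rw [← mul_assoc, conj_mul', ← ofReal_pow, re_ofReal_mul, norm_mul, mul_pow, sub_re, one_re,
    mul_left_comm]
  refine mul_le_mul_of_nonneg_left ?_ (sq_nonneg _)
  have hu2 : normSq u ≤ 1 := by
    rw [← Complex.sq_norm]
    exact pow_le_one₀ (norm_nonneg u) hu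
  rw [Complex.sq_norm, normSq_apply] at *
  simp only [sub_re, one_re, sub_im, one_im]
  nlinarith

theorem ae_mul_one_sub_eq_zero_of_integral_eq_zero {μ : Measure ℂ}
    (hcirc : ∀ᵐ ζ ∂μ, ‖ζ‖ = 1) {f : ℂ → ℂ} {w : ℂ} (hw : ‖w‖ ≤ 1)
    (hf : Integrable (fun ζ ↦ conj (f ζ) * (f ζ * (1 - conj w * ζ))) μ)
    (h : ∫ ζ, conj (f ζ) * (f ζ * (1 - conj w * ζ)) ∂μ = 0) :
    ∀ᵐ ζ ∂μ, f ζ * (1 - conj w * ζ) = 0 := by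
  have hbound : ∀ᵐ ζ ∂μ,
      ‖f ζ * (1 - conj w * ζ)‖ ^ 2 ≤ 2 * (conj (f ζ) * (f ζ * (1 - conj w * ζ))).re := by
    filter_upwards [hcirc] with ζ hζ
    exact norm_mul_one_sub_sq_le_two_mul_re (by simpa [hζ] using hw) _
  have hre_nonneg : 0 ≤ᵐ[μ] fun ζ ↦ (conj (f ζ) * (f ζ * (1 - conj w * ζ))).re := by
    filter_upwards [hbound] with ζ hζ
    simp only [Pi.zero_apply]
    linarith [sq_nonneg ‖f ζ * (1 - conj w * ζ)‖]
  have hre_zero := (integral_eq_zero_iff_of_nonneg_ae hre_nonneg hf.re).1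
    (by simpa [h] using integral_re hf)
  filter_upwards [hbound, hre_zero] with ζ hζ hζ₀
  simp only [Pi.zero_apply] at hζ₀
  rw [hζ₀, mul_zero] at hζ
  exact norm_eq_zero.1 (pow_eq_zero_iff two_ne_zero |>.1 (le_antisymm hζ (sq_nonneg _)))

theorem cd_kernel_integral_ne_zero_general
    (μ : Measure ℂ) [IsFiniteMeasure μ]
    (hcirc : ∀ᵐ ζ ∂μ, ‖ζ‖ = 1)
    (φ : ℕ → Polynomial ℂ) (hφ : IsOPUC μ φ)
    (w : ℂ) (hw : ‖w‖ ≤ 1) (n : ℕ) :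
    ∫ ζ, CDkernel φ n ζ w * (1 - (starRingEnd ℂ) w * ζ) ∂μ ≠ 0 := by
  have hμ := polyConjMulIntegrable_of_ae_norm_eq_one hcirc
  simp_rw [← eval_CDkernelPoly φ n]
  set K := CDkernelPoly φ n w
  have hKw : K.eval w ≠ 0 := eval_self_CDkernelPoly_ne_zero (hφ.1 0) n w
  set H := K * (1 - C (conj w) * X)
  have hH : ∀ ζ, H.eval ζ = K.eval ζ * (1 - conj w * ζ) := by
    intro ζ; simp only [H, eval_mul, eval_sub, eval_one, eval_C, eval_X]
  simp_rw [← hH]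
  intro hH₀
  have hmoments : ∀ k ≤ n, ∫ ζ, conj (ζ ^ k) * H.eval ζ ∂μ = 0
    | 0, _ => by simpa using hH₀
    | k + 1, hk => hφ.integral_conj_pow_succ_mul_eq_zero hcirc hμ hk w
  have hKH : ∫ ζ, conj (K.eval ζ) * H.eval ζ ∂μ = 0 :=
    hμ.integral_conj_eval_mul_eq_zero_of_forall_pow (natDegree_CDkernelPoly_le hφ.1 n w) hmoments
  simp_rw [hH] at hKH
  have hH_ae : ∀ᵐ ζ ∂μ, H.eval ζ = 0 := by
    simpa only [hH] using ae_mul_one_sub_eq_zero_of_integral_eq_zero hcirc hw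
      (by simpa only [hH] using hμ K H) hKH
  have hH_natDegree : H.natDegree ≤ n + 1 :=
    natDegree_mul_le.trans (add_le_add (natDegree_CDkernelPoly_le hφ.1 n w) (by compute_degree))
  have hH_zero : H = 0 := hφ.eq_zero_of_ae_eval_eq_zero hμ hH_natDegree hH_ae
  have hK : K = 0 :=
    (mul_eq_zero.1 hH_zero).resolve_right fun h ↦ by simpa using congrArg (eval 0) h
  exact hKw (by rw [hK, eval_zero])

/-- For `|w| ≤ 1`, `∫ K_n(ζ,w;μ)(1 - w̄ζ) dμ(ζ) ≠ 0`. -/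
theorem cd_kernel_integral_ne_zero
    (μ : Measure ℂ) [IsFiniteMeasure μ]
    (hcirc : ∀ᵐ ζ ∂μ, ‖ζ‖ = 1)
    (hnt : Set.Infinite {ζ : ℂ | ∀ ε > 0, μ (Metric.ball ζ ε) ≠ 0})
    (φ : ℕ → Polynomial ℂ) (hφ : IsOPUC μ φ)
    (w : ℂ) (hw : ‖w‖ ≤ 1) (n : ℕ) :
    ∫ ζ, CDkernel φ n ζ w * (1 - (starRingEnd ℂ) w * ζ) ∂μ ≠ 0 :=
  cd_kernel_integral_ne_zero_general μ hcirc φ hφ w hw n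
end

section
/- Let μ be a nontrivial positive measure on the unit circle and |w| ≥ 1. If P is a polynomial of degree exactly n satisfying ∫_T ζ̄^s P(ζ)(1 − w̄ζ)dμ(ζ) = 0 for all 1 ≤ s ≤ n, then P is a constant multiple of K_n(·,w;μ). -/
/-!
On the unit circle `ζ̄ ζ = 1`, so the orthogonality relations turn into the moment recursion
`∫ ζ̄ ^ s P dμ = w̄ ^ s ∫ P dμ` for `s ≤ n`; by linearity `∫ Q̄ P dμ = conj (Q w) ∫ P dμ` for every
polynomial `Q` of degree at most `n`. Expanding `P` in the orthonormal basis `φ 0, …, φ n`, its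
coefficients `∫ φ̄ⱼ P dμ` are therefore `conj (φⱼ w) ∫ P dμ`, i.e. `P = (∫ P dμ) K_n(·, w)`.
-/

open MeasureTheory Complex Polynomial

theorem MeasureTheory.Integrable.of_continuous_of_ae_mem_compact {X E : Type*}
    [TopologicalSpace X] [T2Space X] [MeasurableSpace X] [OpensMeasurableSpace X]
    [NormedAddCommGroup E] {μ : Measure X} [IsFiniteMeasure μ] {K : Set X}
    (hK : IsCompact K) (hμK : ∀ᵐ x ∂μ, x ∈ K) {f : X → E} (hf : Continuous f) :
    Integrable f μ := by
  simpa [IntegrableOn, Measure.restrict_eq_self_of_ae_mem hμK] using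
    hf.continuousOn.integrableOn_compact (μ := μ) hK

theorem Polynomial.exists_eq_sum_smul_of_degree_eq {F : Type*} [Field F] {φ : ℕ → F[X]}
    (hφ : ∀ k, (φ k).degree = k) {m : ℕ} {Q : F[X]} (hQ : Q.degree < m) :
    ∃ a : ℕ → F, ∑ j ∈ Finset.range m, a j • φ j = Q := by
  let S : Sequence F := ⟨φ, hφ⟩
  have hspan := S.span_degreeLT (m := m) fun i _ ↦ (leadingCoeff_ne_zero.2 (S.ne_zero i)).isUnit
  rw [← Finset.coe_range] at hspan
  exact (Submodule.mem_span_image_finset_iff_exists_fun' F).1 (hspan ▸ mem_degreeLT.2 hQ)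

theorem Polynomial.eq_sum_integral_smul_of_orthonormal {μ : Measure ℂ} [IsFiniteMeasure μ]
    {K : Set ℂ} (hK : IsCompact K) (hμK : ∀ᵐ ζ ∂μ, ζ ∈ K) {φ : ℕ → ℂ[X]}
    (hφ : ∀ k, (φ k).degree = k)
    (hon : ∀ i j, ∫ ζ, (starRingEnd ℂ) ((φ i).eval ζ) * (φ j).eval ζ ∂μ = if i = j then 1 else 0)
    {m : ℕ} {Q : ℂ[X]} (hQ : Q.degree < m) :
    Q = ∑ j ∈ Finset.range m, (∫ ζ, (starRingEnd ℂ) ((φ j).eval ζ) * Q.eval ζ ∂μ) • φ j := by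
  obtain ⟨a, rfl⟩ := exists_eq_sum_smul_of_degree_eq hφ hQ
  refine Finset.sum_congr rfl fun j hj ↦ congrArg (· • φ j) ?_
  have hint : ∀ i, Integrable (fun ζ ↦ (starRingEnd ℂ) ((φ j).eval ζ) * (φ i).eval ζ) μ :=
    fun i ↦ .of_continuous_of_ae_mem_compact hK hμK
      ((φ j).continuous.star.mul (φ i).continuous)
  simp_rw [eval_finsetSum, eval_smul, smul_eq_mul, Finset.mul_sum, mul_left_comm _ (a _)]
  rw [integral_finsetSum _ fun i _ ↦ (hint i).const_mul _]
  simp [integral_const_mul, hon, hj]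

section UnitCircle

variable {μ : Measure ℂ} [IsFiniteMeasure μ] (hcirc : ∀ᵐ ζ ∂μ, ‖ζ‖ = 1)
include hcirc

theorem integrable_of_ae_norm_eq_one {f : ℂ → ℂ} (hf : Continuous f) : Integrable f μ :=
  .of_continuous_of_ae_mem_compact (isCompact_sphere 0 1)
    (by simpa only [mem_sphere_zero_iff_norm] using hcirc) hf

theorem integral_conj_pow_succ_mul_eq {f : ℂ → ℂ} (hf : Continuous f) (w : ℂ) (s : ℕ)
    (h : ∫ ζ, (starRingEnd ℂ) ζ ^ (s + 1) * f ζ * (1 - (starRingEnd ℂ) w * ζ) ∂μ = 0) :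
    ∫ ζ, (starRingEnd ℂ) ζ ^ (s + 1) * f ζ ∂μ =
      (starRingEnd ℂ) w * ∫ ζ, (starRingEnd ℂ) ζ ^ s * f ζ ∂μ := by
  have hint : ∀ k, Integrable (fun ζ ↦ (starRingEnd ℂ) ζ ^ k * f ζ) μ :=
    fun k ↦ integrable_of_ae_norm_eq_one hcirc ((continuous_star.pow k).mul hf)
  rw [← sub_eq_zero, ← integral_const_mul, ← integral_sub (hint _) ((hint _).const_mul _), ← h]
  refine integral_congr_ae ?_
  filter_upwards [hcirc] with ζ hζ
  have hunit : (starRingEnd ℂ) ζ * ζ = 1 := by rw [conj_mul', hζ]; norm_num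
  linear_combination (starRingEnd ℂ) w * (starRingEnd ℂ) ζ ^ s * f ζ * hunit

theorem integral_conj_pow_mul_eq {f : ℂ → ℂ} (hf : Continuous f) (w : ℂ) {n : ℕ}
    (h : ∀ s, 1 ≤ s → s ≤ n →
      ∫ ζ, (starRingEnd ℂ) ζ ^ s * f ζ * (1 - (starRingEnd ℂ) w * ζ) ∂μ = 0)
    {s : ℕ} (hs : s ≤ n) :
    ∫ ζ, (starRingEnd ℂ) ζ ^ s * f ζ ∂μ = (starRingEnd ℂ) w ^ s * ∫ ζ, f ζ ∂μ := by
  induction s with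
  | zero => simp
  | succ s ih =>
    rw [integral_conj_pow_succ_mul_eq hcirc hf w s (h _ s.succ_pos hs), ih (by omega), pow_succ,
      mul_assoc, mul_left_comm]

theorem integral_conj_eval_mul_eq {f : ℂ → ℂ} (hf : Continuous f) (w : ℂ) {n : ℕ}
    (h : ∀ s, 1 ≤ s → s ≤ n →
      ∫ ζ, (starRingEnd ℂ) ζ ^ s * f ζ * (1 - (starRingEnd ℂ) w * ζ) ∂μ = 0)
    {Q : ℂ[X]} (hQ : Q.natDegree ≤ n) :
    ∫ ζ, (starRingEnd ℂ) (Q.eval ζ) * f ζ ∂μ = (starRingEnd ℂ) (Q.eval w) * ∫ ζ, f ζ ∂μ := by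
  have hexp : ∀ z, Q.eval z = ∑ k ∈ Finset.range (n + 1), Q.coeff k * z ^ k :=
    fun z ↦ eval_eq_sum_range' (by omega) z
  simp_rw [hexp, map_sum, Finset.sum_mul, map_mul, map_pow, mul_assoc]
  rw [integral_finsetSum _ fun k _ ↦ (integrable_of_ae_norm_eq_one hcirc
    (f := fun ζ ↦ (starRingEnd ℂ) ζ ^ k * f ζ) ((continuous_star.pow k).mul hf)).const_mul _]
  refine Finset.sum_congr rfl fun k hk ↦ ?_
  rw [integral_const_mul, integral_conj_pow_mul_eq hcirc hf w h
    (Nat.lt_succ_iff.1 (Finset.mem_range.1 hk))]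

end UnitCircle

theorem cd_kernel_characterization_outside_general
    (μ : Measure ℂ) [IsFiniteMeasure μ]
    (hcirc : ∀ᵐ ζ ∂μ, ‖ζ‖ = 1)
    (φ : ℕ → Polynomial ℂ) (hφ : IsOPUC μ φ)
    (w : ℂ) (n : ℕ)
    (P : Polynomial ℂ) (hdeg : P.degree = n)
    (horth : ∀ s : ℕ, 1 ≤ s → s ≤ n →
      ∫ ζ, ((starRingEnd ℂ) ζ) ^ s * P.eval ζ * (1 - (starRingEnd ℂ) w * ζ) ∂μ = 0) :
    ∃ c : ℂ, ∀ z : ℂ, P.eval z = c * CDkernel φ n z w := by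
  obtain ⟨hφdeg, -, hon⟩ := hφ
  have hexp := eq_sum_integral_smul_of_orthonormal (isCompact_sphere 0 1)
    (by simpa only [mem_sphere_zero_iff_norm] using hcirc) hφdeg hon
    (m := n + 1) (Q := P) (by rw [hdeg]; exact_mod_cast n.lt_succ_self)
  refine ⟨∫ ζ, P.eval ζ ∂μ, fun z ↦ ?_⟩
  rw [CDkernel, Finset.mul_sum]
  nth_rewrite 1 [hexp]
  rw [eval_finsetSum]
  refine Finset.sum_congr rfl fun j hj ↦ ?_
  have hφj : (φ j).natDegree ≤ n :=
    (natDegree_eq_of_degree_eq_some (hφdeg j)).le.trans (Finset.mem_range_succ_iff.1 hj)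
  rw [eval_smul, smul_eq_mul, integral_conj_eval_mul_eq hcirc P.continuous w horth hφj]
  ring

/-- Characterization of the CD kernel for `|w| ≥ 1`: any polynomial of degree exactly `n`
satisfying the orthogonality relations is a constant multiple of `K_n(·,w;μ)`. -/
theorem cd_kernel_characterization_outside
    (μ : Measure ℂ) [IsFiniteMeasure μ]
    (hcirc : ∀ᵐ ζ ∂μ, ‖ζ‖ = 1)
    (hnt : Set.Infinite {ζ : ℂ | ∀ ε > 0, μ (Metric.ball ζ ε) ≠ 0})
    (φ : ℕ → Polynomial ℂ) (hφ : IsOPUC μ φ)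
    (w : ℂ) (hw : 1 ≤ ‖w‖) (n : ℕ)
    (P : Polynomial ℂ) (hdeg : P.degree = n)
    (horth : ∀ s : ℕ, 1 ≤ s → s ≤ n →
      ∫ ζ, ((starRingEnd ℂ) ζ) ^ s * P.eval ζ * (1 - (starRingEnd ℂ) w * ζ) ∂μ = 0) :
    ∃ c : ℂ, ∀ z : ℂ, P.eval z = c * CDkernel φ n z w :=
  cd_kernel_characterization_outside_general μ hcirc φ hφ w n P hdeg horth
end

section
/- Let μ be a nontrivial positive measure on the unit circle and |w| ≤ 1. If P is a polynomial of degree at most n satisfying ∫_T ζ̄^s P(ζ)(1 − w̄ζ)dμ(ζ) = 0 for all 1 ≤ s ≤ n and ∫_T P(ζ)(1 − w̄ζ)dμ(ζ) ≠ 0, then P is a nonzero constant multiple of K_n(·,w;μ). -/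
/-!
Write `⟪p, q⟫ = ∫ conj (p ζ) q ζ dμ`. On the unit circle `conj ζ * ζ = 1`, so multiplication by
`X` is an isometry, and expanding in the orthonormal basis gives the reproducing property
`⟪p, K_n(·, w)⟫ = conj (p w)` for `deg p ≤ n`. Hence, for `1 ≤ s ≤ n`,
`⟪X^s, K_n(·, w) (1 - w̄ X)⟫ = w̄^s - w̄ w̄^(s-1) = 0`, so `K_n(·, w)` satisfies the same conditions
as `P`, and with `α, β` the integrals of `K_n(·, w)` and `P` against `(1 - w̄ ζ) dμ` the polynomial
`Q = α P - β K_n(·, w)` has `⟪X^s, Q (1 - w̄ X)⟫ = 0` for all `0 ≤ s ≤ n`.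

Then `Q (1 - w̄ X)`, of degree `≤ n + 1`, is orthogonal to every polynomial of degree `≤ n`, so it
equals `a φ_(n+1)`. If `a ≠ 0`, either `w = 0` and `deg Q = n + 1`, or `φ_(n+1)` vanishes at
`1 / w̄`, which lies outside the open unit disk. The latter is impossible: if `φ_m = (X - z) q`,
then `q ⊥ φ_m` and `X q = φ_m + z q` give `‖q‖² = ‖X q‖² = 1 + |z|² ‖q‖²`, forcing `|z| < 1`.
So `Q = 0`, and `α ≠ 0` because `⟪1, K_n(·, w)⟫ = 1`.
-/

open MeasureTheory Complex Polynomial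

open ComplexConjugate

theorem Polynomial.Sequence.exists_eq_sum_smul_of_degree_lt {K : Type*} [Field K]
    (S : Sequence K) {m : ℕ} {p : K[X]} (hp : p.degree < m) :
    ∃ a : ℕ → K, p = ∑ j ∈ Finset.range m, a j • S j := by
  have hmem : p ∈ Submodule.span K (S '' ↑(Finset.range m)) := by
    rw [Finset.coe_range, S.span_degreeLT fun i _ => (leadingCoeff_ne_zero.2 (S.ne_zero i)).isUnit]
    exact mem_degreeLT.2 hp
  obtain ⟨a, ha⟩ := (Submodule.mem_span_image_finset_iff_exists_fun' K).1 hmem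
  exact ⟨a, ha.symm⟩

theorem Continuous.integrable_of_ae_mem_compact {α E : Type*} [TopologicalSpace α] [T2Space α]
    [MeasurableSpace α] [OpensMeasurableSpace α] [NormedAddCommGroup E] {μ : Measure α}
    [IsFiniteMeasureOnCompacts μ] {K : Set α} (hK : IsCompact K) (hμK : ∀ᵐ x ∂μ, x ∈ K)
    {f : α → E} (hf : Continuous f) : Integrable f μ := by
  rw [← Measure.restrict_eq_self_of_ae_mem hμK]
  exact hf.continuousOn.integrableOn_compact hK

theorem one_sub_C_mul_X_ne_zero {R : Type*} [Ring R] [Nontrivial R] (c : R) :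
    (1 - C c * X : R[X]) ≠ 0 := fun h => by
  simpa using congrArg (eval 0) h

noncomputable def cdKernelPoly (φ : ℕ → ℂ[X]) (n : ℕ) (w : ℂ) : ℂ[X] :=
  ∑ j ∈ Finset.range (n + 1), conj ((φ j).eval w) • φ j

theorem eval_cdKernelPoly (φ : ℕ → ℂ[X]) (n : ℕ) (z w : ℂ) :
    (cdKernelPoly φ n w).eval z = CDkernel φ n z w := by
  simp [cdKernelPoly, CDkernel, eval_finsetSum]

theorem degree_cdKernelPoly_le (S : Sequence ℂ) (n : ℕ) (w : ℂ) :
    (cdKernelPoly S n w).degree ≤ n := by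
  refine (degree_sum_le _ _).trans (Finset.sup_le fun j hj => (degree_smul_le _ _).trans ?_)
  rw [S.degree_eq j]
  exact_mod_cast Nat.lt_succ_iff.1 (Finset.mem_range.1 hj)

section PolyInner

variable {μ : Measure ℂ} [IsFiniteMeasure μ]

theorem integrable_conj_eval_mul_eval (hμ : ∀ᵐ ζ ∂μ, ‖ζ‖ = 1) (p q : ℂ[X]) :
    Integrable (fun ζ => conj (p.eval ζ) * q.eval ζ) μ :=
  ((continuous_conj.comp p.continuous).mul q.continuous).integrable_of_ae_mem_compact
    (isCompact_sphere 0 1) (by simpa using hμ)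

noncomputable def polyInner (hμ : ∀ᵐ ζ ∂μ, ‖ζ‖ = 1) : ℂ[X] →ₗ⋆[ℂ] ℂ[X] →ₗ[ℂ] ℂ :=
  LinearMap.mk₂'ₛₗ (starRingEnd ℂ) (RingHom.id ℂ)
    (fun p q => ∫ ζ, conj (p.eval ζ) * q.eval ζ ∂μ)
    (fun p₁ p₂ q => by
      simp only [eval_add, map_add, add_mul]
      exact integral_add (integrable_conj_eval_mul_eval hμ _ _)
        (integrable_conj_eval_mul_eval hμ _ _))
    (fun c p q => by
      simp only [eval_smul, smul_eq_mul, map_mul, mul_assoc, integral_const_mul])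
    (fun p q₁ q₂ => by
      simp only [eval_add, mul_add]
      exact integral_add (integrable_conj_eval_mul_eval hμ _ _)
        (integrable_conj_eval_mul_eval hμ _ _))
    (fun c p q => by
      simp only [eval_smul, smul_eq_mul, mul_left_comm _ c, integral_const_mul, RingHom.id_apply])

variable {hμ : ∀ᵐ ζ ∂μ, ‖ζ‖ = 1}

theorem polyInner_apply (p q : ℂ[X]) :
    polyInner hμ p q = ∫ ζ, conj (p.eval ζ) * q.eval ζ ∂μ := rfl

theorem conj_polyInner (p q : ℂ[X]) : conj (polyInner hμ p q) = polyInner hμ q p := by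
  simp only [polyInner_apply, ← integral_conj, map_mul, conj_conj, mul_comm]

theorem polyInner_X_mul_X_mul (p q : ℂ[X]) : polyInner hμ (X * p) (X * q) = polyInner hμ p q := by
  refine integral_congr_ae ?_
  filter_upwards [hμ] with ζ hζ
  have hunit : conj ζ * ζ = 1 := by rw [conj_mul', hζ]; norm_num
  simp only [eval_mul, eval_X, map_mul]
  linear_combination (conj (p.eval ζ) * q.eval ζ) * hunit

theorem polyInner_self_re_nonneg (p : ℂ[X]) : 0 ≤ (polyInner hμ p p).re := by
  have : polyInner hμ p p = ((∫ ζ, ‖p.eval ζ‖ ^ 2 ∂μ : ℝ) : ℂ) := by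
    rw [polyInner_apply, ← integral_complex_ofReal]
    push_cast
    simp only [conj_mul']
  rw [this, ofReal_re]
  exact integral_nonneg fun ζ => by positivity

theorem polyInner_eq_zero_of_forall_X_pow {n : ℕ} {R : ℂ[X]}
    (hR : ∀ s ≤ n, polyInner hμ (X ^ s) R = 0) {p : ℂ[X]} (hp : p.degree ≤ n) :
    polyInner hμ p R = 0 := by
  have hnat : p.natDegree < n + 1 := Nat.lt_succ_of_le (natDegree_le_iff_degree_le.2 hp)
  rw [p.as_sum_range' (n + 1) hnat, map_sum, LinearMap.sum_apply]
  refine Finset.sum_eq_zero fun s hs => ?_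
  rw [← C_mul_X_pow_eq_monomial, ← smul_eq_C_mul, map_smulₛₗ, LinearMap.smul_apply,
    hR s (Nat.lt_succ_iff.1 (Finset.mem_range.1 hs)), smul_zero]

section Orthonormal

variable {S : Sequence ℂ} (hS : ∀ m n, polyInner hμ (S m) (S n) = if m = n then 1 else 0)
include hS

theorem polyInner_sum_smul (k m : ℕ) (a : ℕ → ℂ) :
    polyInner hμ (S k) (∑ j ∈ Finset.range m, a j • S j) = if k < m then a k else 0 := by
  simp [map_sum, hS, Finset.sum_ite_eq]

theorem eq_sum_polyInner_smul {m : ℕ} {p : ℂ[X]} (hp : p.degree < m) :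
    p = ∑ j ∈ Finset.range m, polyInner hμ (S j) p • S j := by
  obtain ⟨a, rfl⟩ := S.exists_eq_sum_smul_of_degree_lt hp
  refine Finset.sum_congr rfl fun j hj => ?_
  rw [polyInner_sum_smul hS, if_pos (Finset.mem_range.1 hj)]

theorem polyInner_eq_zero_of_degree_lt {m : ℕ} {q : ℂ[X]} (hq : q.degree < m) :
    polyInner hμ (S m) q = 0 := by
  obtain ⟨a, rfl⟩ := S.exists_eq_sum_smul_of_degree_lt hq
  rw [polyInner_sum_smul hS, if_neg (lt_irrefl m)]

theorem eval_ne_zero_of_one_le_norm (m : ℕ) {z : ℂ} (hz : 1 ≤ ‖z‖) : (S m).eval z ≠ 0 := by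
  intro hroot
  obtain ⟨q, hq⟩ := dvd_iff_isRoot.2 hroot
  have hq0 : q ≠ 0 := by rintro rfl; simp at hq
  have hqdeg : q.degree < m := by
    rw [← S.degree_eq m, hq, degree_mul, degree_X_sub_C, degree_eq_natDegree hq0]
    exact_mod_cast Nat.lt_one_add_iff.2 le_rfl
  have hXq : X * q = S m + z • q := by rw [hq, smul_eq_C_mul]; ring
  have horth : polyInner hμ q (S m) = 0 := by
    rw [← conj_polyInner, polyInner_eq_zero_of_degree_lt hS hqdeg, map_zero]
  have key : polyInner hμ q q = 1 + (conj z * z) * polyInner hμ q q := calc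
    polyInner hμ q q = polyInner hμ (S m + z • q) (S m + z • q) := by
      rw [← hXq, polyInner_X_mul_X_mul]
    _ = 1 + (conj z * z) * polyInner hμ q q := by
      simp only [map_add, map_smulₛₗ, LinearMap.add_apply, LinearMap.smul_apply, hS, if_pos,
        polyInner_eq_zero_of_degree_lt hS hqdeg, horth, RingHom.id_apply, smul_eq_mul]
      ring
  have hre := congrArg re key
  rw [conj_mul', ← ofReal_pow, add_re, one_re, re_ofReal_mul] at hre
  have ht := polyInner_self_re_nonneg (hμ := hμ) q
  nlinarith [mul_nonneg (sub_nonneg.2 (one_le_pow₀ (n := 2) hz)) ht]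

theorem polyInner_cdKernelPoly {n : ℕ} {p : ℂ[X]} (hp : p.degree ≤ n) (w : ℂ) :
    polyInner hμ p (cdKernelPoly S n w) = conj (p.eval w) := by
  have hexp := congrArg (eval w)
    (eq_sum_polyInner_smul hS (hp.trans_lt (WithBot.coe_lt_coe.2 n.lt_succ_self)))
  rw [hexp, eval_finsetSum, map_sum, cdKernelPoly, map_sum]
  refine Finset.sum_congr rfl fun j _ => ?_
  rw [map_smul, ← conj_polyInner p (S j), eval_smul, smul_eq_mul, smul_eq_mul, map_mul, conj_conj,
    mul_comm]

theorem cdKernelPoly_ne_zero (n : ℕ) (w : ℂ) : cdKernelPoly S n w ≠ 0 := fun hK => by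
  have h := polyInner_cdKernelPoly hS (p := 1) (n := n)
    (by rw [degree_one]; exact_mod_cast n.zero_le) w
  simp [hK] at h

theorem polyInner_X_pow_cdKernelPoly_mul {n s : ℕ} (hs : 1 ≤ s) (hsn : s ≤ n) (w : ℂ) :
    polyInner hμ (X ^ s) (cdKernelPoly S n w * (1 - C (conj w) * X)) = 0 := by
  obtain ⟨r, rfl⟩ := Nat.exists_eq_add_of_le' hs
  set K := cdKernelPoly S n w
  have hsplit : K * (1 - C (conj w) * X) = K - conj w • (X * K) := by rw [smul_eq_C_mul]; ring
  have hdeg : ∀ k ≤ n, (X ^ k : ℂ[X]).degree ≤ n := fun k hk => by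
    rw [degree_X_pow]; exact_mod_cast hk
  rw [hsplit, map_sub, map_smul, polyInner_cdKernelPoly hS (hdeg _ hsn), pow_succ',
    polyInner_X_mul_X_mul, polyInner_cdKernelPoly hS (hdeg _ (by omega))]
  simp only [eval_mul, eval_X, eval_pow, map_mul, map_pow, smul_eq_mul, sub_self]

theorem eq_zero_of_forall_polyInner_X_pow_mul_eq_zero {w : ℂ} (hw : ‖w‖ ≤ 1) {n : ℕ} {Q : ℂ[X]}
    (hQ : Q.degree ≤ n) (h : ∀ s ≤ n, polyInner hμ (X ^ s) (Q * (1 - C (conj w) * X)) = 0) :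
    Q = 0 := by
  set R := Q * (1 - C (conj w) * X)
  have hRdeg : R.degree < ↑(n + 2) := by
    have hu : (1 - C (conj w) * X : ℂ[X]).degree ≤ 1 := by compute_degree
    calc R.degree ≤ n + 1 := (degree_mul_le _ _).trans (add_le_add hQ hu)
      _ < ↑(n + 2) := by norm_cast; omega
  have hlow : ∀ j ∈ Finset.range (n + 1), polyInner hμ (S j) R • S j = 0 := fun j hj => by
    have hjn : (S j).degree ≤ n := by
      rw [S.degree_eq]; exact_mod_cast Nat.lt_succ_iff.1 (Finset.mem_range.1 hj)
    rw [polyInner_eq_zero_of_forall_X_pow h hjn, zero_smul]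
  have hR : R = polyInner hμ (S (n + 1)) R • S (n + 1) := by
    conv_lhs => rw [eq_sum_polyInner_smul hS hRdeg]
    rw [Finset.sum_range_succ, Finset.sum_eq_zero hlow, zero_add]
  set a := polyInner hμ (S (n + 1)) R
  suffices ha : a = 0 by
    rw [ha, zero_smul] at hR
    exact (mul_eq_zero.1 hR).resolve_right (one_sub_C_mul_X_ne_zero _)
  by_contra ha
  by_cases hw0 : w = 0
  · have hQdeg : Q.degree = ↑(n + 1) := by
      have hRQ : R = Q := by simp [R, hw0]
      rw [← hRQ, hR, smul_eq_C_mul, degree_C_mul ha, S.degree_eq]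
    rw [hQdeg] at hQ
    norm_cast at hQ
    omega
  · have hz : 1 ≤ ‖(conj w)⁻¹‖ := by
      rw [norm_inv, Complex.norm_conj]
      exact (one_le_inv₀ (norm_pos_iff.2 hw0)).2 hw
    have hval : eval (conj w)⁻¹ (Q * (1 - C (conj w) * X)) = eval (conj w)⁻¹ (a • S (n + 1)) :=
      congrArg _ hR
    rw [eval_mul, eval_sub, eval_one, eval_mul, eval_C, eval_X,
      mul_inv_cancel₀ ((_root_.map_ne_zero _).2 hw0), sub_self, mul_zero, eval_smul,
      smul_eq_mul] at hval
    exact eval_ne_zero_of_one_le_norm hS (n + 1) hz ((mul_eq_zero.1 hval.symm).resolve_left ha)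

theorem smul_eq_smul_cdKernelPoly {w : ℂ} (hw : ‖w‖ ≤ 1) {n : ℕ} {P : ℂ[X]} (hP : P.degree ≤ n)
    (horth : ∀ s, 1 ≤ s → s ≤ n → polyInner hμ (X ^ s) (P * (1 - C (conj w) * X)) = 0) :
    polyInner hμ 1 (cdKernelPoly S n w * (1 - C (conj w) * X)) • P =
      polyInner hμ 1 (P * (1 - C (conj w) * X)) • cdKernelPoly S n w := by
  rw [← sub_eq_zero]
  refine eq_zero_of_forall_polyInner_X_pow_mul_eq_zero hS hw (n := n) ?_ fun s hs => ?_
  · exact (degree_sub_le _ _).trans (max_le ((degree_smul_le _ _).trans hP)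
      ((degree_smul_le _ _).trans (degree_cdKernelPoly_le S n w)))
  rw [sub_mul, smul_mul_assoc, smul_mul_assoc, map_sub, map_smul, map_smul]
  rcases Nat.eq_zero_or_pos s with rfl | hs1
  · rw [pow_zero, smul_eq_mul, smul_eq_mul, mul_comm, sub_self]
  · rw [horth s hs1 hs, polyInner_X_pow_cdKernelPoly_mul hS hs1 hs, smul_zero, smul_zero, sub_self]

end Orthonormal

end PolyInner

theorem cd_kernel_characterization_inside_general
    (μ : Measure ℂ) [IsFiniteMeasure μ]
    (hcirc : ∀ᵐ ζ ∂μ, ‖ζ‖ = 1)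
    (φ : ℕ → Polynomial ℂ) (hφ : IsOPUC μ φ)
    (w : ℂ) (hw : ‖w‖ ≤ 1) (n : ℕ)
    (P : Polynomial ℂ) (hdeg : P.degree ≤ n)
    (horth : ∀ s : ℕ, 1 ≤ s → s ≤ n →
      ∫ ζ, ((starRingEnd ℂ) ζ) ^ s * P.eval ζ * (1 - (starRingEnd ℂ) w * ζ) ∂μ = 0)
    (hne : ∫ ζ, P.eval ζ * (1 - (starRingEnd ℂ) w * ζ) ∂μ ≠ 0) :
    ∃ c : ℂ, c ≠ 0 ∧ ∀ z : ℂ, P.eval z = c * CDkernel φ n z w := by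
  obtain ⟨hφdeg, -, hφon⟩ := hφ
  let S : Sequence ℂ := ⟨φ, hφdeg⟩
  have hS : ∀ m n, polyInner hcirc (S m) (S n) = if m = n then 1 else 0 := hφon
  have hint (p : ℂ[X]) (s : ℕ) : polyInner hcirc (X ^ s) (p * (1 - C (conj w) * X)) =
      ∫ ζ, conj ζ ^ s * p.eval ζ * (1 - conj w * ζ) ∂μ := by
    simp only [polyInner_apply, eval_mul, eval_pow, eval_X, map_pow, eval_sub, eval_one, eval_C,
      mul_assoc]
  have hβ : polyInner hcirc 1 (P * (1 - C (conj w) * X)) ≠ 0 := by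
    have h0 := hint P 0
    rw [pow_zero] at h0
    simpa only [h0, pow_zero, one_mul] using hne
  have key := smul_eq_smul_cdKernelPoly hS hw hdeg fun s h1 h2 => (hint P s).trans (horth s h1 h2)
  set α := polyInner hcirc 1 (cdKernelPoly S n w * (1 - C (conj w) * X))
  have hα : α ≠ 0 := fun hα => by
    rw [hα, zero_smul, eq_comm, smul_eq_zero] at key
    exact key.elim hβ (cdKernelPoly_ne_zero hS n w)
  refine ⟨_ / α, div_ne_zero hβ hα, fun z => ?_⟩
  have hz := congrArg (eval z) key
  rw [eval_smul, eval_smul, smul_eq_mul, smul_eq_mul, eval_cdKernelPoly] at hz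
  field_simp
  linear_combination hz

/-- Characterization of the CD kernel for `|w| ≤ 1`: any polynomial of degree at most `n`
satisfying the orthogonality relations and having nonzero total `μ_w`-integral is a
nonzero constant multiple of `K_n(·,w;μ)`. -/
theorem cd_kernel_characterization_inside
    (μ : Measure ℂ) [IsFiniteMeasure μ]
    (hcirc : ∀ᵐ ζ ∂μ, ‖ζ‖ = 1)
    (hnt : Set.Infinite {ζ : ℂ | ∀ ε > 0, μ (Metric.ball ζ ε) ≠ 0})
    (φ : ℕ → Polynomial ℂ) (hφ : IsOPUC μ φ)
    (w : ℂ) (hw : ‖w‖ ≤ 1) (n : ℕ)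
    (P : Polynomial ℂ) (hdeg : P.degree ≤ n)
    (horth : ∀ s : ℕ, 1 ≤ s → s ≤ n →
      ∫ ζ, ((starRingEnd ℂ) ζ) ^ s * P.eval ζ * (1 - (starRingEnd ℂ) w * ζ) ∂μ = 0)
    (hne : ∫ ζ, P.eval ζ * (1 - (starRingEnd ℂ) w * ζ) ∂μ ≠ 0) :
    ∃ c : ℂ, c ≠ 0 ∧ ∀ z : ℂ, P.eval z = c * CDkernel φ n z w :=
  cd_kernel_characterization_inside_general μ hcirc φ hφ w hw n P hdeg horth hne
end
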